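/- arXiv:1807.03609 — 3 statements merged into one kernel-verified Lean document; each statement's English description precedes it below -/
import Mathlib

section
/- Let ν ≥ 2, let α ∈ ℝ^ν with α_a ∈ (0,1) for all a, let k ∈ ℝ^ν with k_a ∈ (0,1) for all a, and set k* = min_a k_a. If c > 1 + (ν−1)/k*, then the ν×ν matrix J^c = c·diag(k_1α_1², …, k_να_ν²) − J is positive definite, where J is the matrix with J_{aa} = k_a α_a² and J_{ab} = α_a α_b for a ≠ b. -/
/-!
Writing `1` for the all-ones matrix, `J^c = D_α (diag((c - 1) k_a + 1) - 1) D_α` with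
`D_α = diag(α)`, so by congruence it suffices that `diag(w) - 1` is positive definite when
every `w_a > ν`. This follows by splitting it as `diag(w - ν) + (ν • I - 1)`: the first summand
is positive definite and the second positive semidefinite by Cauchy–Schwarz,
`(∑ x_a)² ≤ ν ∑ x_a²`. The hypothesis on `c` is exactly `(c - 1) k* + 1 > ν`.
-/

/-- The multi-species Hopfield interaction matrix `J`, with `J_{aa} = k_a α_a²`
and `J_{ab} = α_a α_b` for `a ≠ b`. -/
def hopfieldJ (ν : ℕ) (α k : Fin ν → ℝ) : Matrix (Fin ν) (Fin ν) ℝ :=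
  Matrix.of fun a b => if a = b then k a * α a ^ 2 else α a * α b

open Matrix Finset

section AllOnes

variable {n : Type*} [Fintype n] [DecidableEq n]

theorem posSemidef_card_smul_one_sub_of_one :
    ((Fintype.card n : ℝ) • (1 : Matrix n n ℝ) - of fun _ _ => 1).PosSemidef := by
  refine .of_dotProduct_mulVec_nonneg (by ext i j; simp [one_apply, eq_comm]) fun x => ?_
  have hquad :
      star x ⬝ᵥ (((Fintype.card n : ℝ) • (1 : Matrix n n ℝ) - of fun _ _ => 1) *ᵥ x) =
        Fintype.card n * ∑ i, x i ^ 2 - (∑ i, x i) ^ 2 := by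
    rw [sub_mulVec, smul_mulVec, one_mulVec, dotProduct_sub, dotProduct_smul]
    simp [dotProduct, mulVec, sq, mul_sum, mul_comm]
  rw [hquad, sub_nonneg]
  simpa using sq_sum_le_card_mul_sum_sq (s := univ) (f := x)

theorem posDef_diagonal_sub_of_one {w : n → ℝ} (hw : ∀ i, (Fintype.card n : ℝ) < w i) :
    (diagonal w - of fun _ _ => 1).PosDef := by
  have hsplit : diagonal w - of (fun _ _ => 1) =
      diagonal (w - fun _ => (Fintype.card n : ℝ)) +
        ((Fintype.card n : ℝ) • (1 : Matrix n n ℝ) - of fun _ _ => 1) := by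
    rw [smul_one_eq_diagonal, ← add_sub_assoc, diagonal_add]
    simp
  rw [hsplit]
  exact (PosDef.diagonal fun i => sub_pos.2 (hw i)).add_posSemidef
    posSemidef_card_smul_one_sub_of_one

end AllOnes

theorem Matrix.PosDef.diagonal_mul_mul_diagonal {n R : Type*} [Fintype n] [DecidableEq n]
    [Field R] [PartialOrder R] [StarRing R] [TrivialStar R] {A : Matrix n n R} (hA : A.PosDef)
    {d : n → R} (hd : ∀ i, d i ≠ 0) : (diagonal d * A * diagonal d).PosDef := by
  have hinj : Function.Injective (diagonal d).mulVec := fun x y hxy => by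
    ext i
    simpa [mulVec_diagonal, hd i] using congrFun hxy i
  simpa [diagonal_conjTranspose] using hA.conjTranspose_mul_mul_same hinj

theorem smul_diagonal_sub_hopfieldJ (ν : ℕ) (α k : Fin ν → ℝ) (c : ℝ) :
    c • diagonal (fun a => k a * α a ^ 2) - hopfieldJ ν α k =
      diagonal α * (diagonal (fun a => (c - 1) * k a + 1) - of fun _ _ => 1) * diagonal α := by
  ext a b
  rcases eq_or_ne a b with rfl | hab
  · simp only [hopfieldJ, Matrix.sub_apply, Matrix.smul_apply, diagonal_apply_eq, smul_eq_mul,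
      of_apply, if_true, mul_diagonal, diagonal_mul, add_sub_cancel_right]
    ring
  · simp [hopfieldJ, hab]

theorem stmt0_general (ν : ℕ) (α k : Fin ν → ℝ)
    (hα : ∀ a, α a ∈ Set.Ioo (0 : ℝ) 1) (hk : ∀ a, k a ∈ Set.Ioo (0 : ℝ) 1)
    (kstar : ℝ) (hkstar : IsLeast (Set.range k) kstar)
    (c : ℝ) (hc : c > 1 + ((ν : ℝ) - 1) / kstar) :
    (c • Matrix.diagonal (fun a => k a * α a ^ 2) - hopfieldJ ν α k).PosDef := by
  obtain ⟨⟨a₀, rfl⟩, hmin⟩ := hkstar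
  have hk₀ : 0 < k a₀ := (hk a₀).1
  have hν : (1 : ℝ) ≤ ν := by exact_mod_cast a₀.pos
  have hc₁ : 0 ≤ c - 1 := by linarith [div_nonneg (sub_nonneg.2 hν) hk₀.le]
  have hw : ∀ a, (Fintype.card (Fin ν) : ℝ) < (c - 1) * k a + 1 := fun a => by
    have h₀ : (ν : ℝ) - 1 < (c - 1) * k a₀ := by
      rwa [gt_iff_lt, ← lt_sub_iff_add_lt', div_lt_iff₀ hk₀] at hc
    have := mul_le_mul_of_nonneg_left (hmin ⟨a, rfl⟩) hc₁
    rw [Fintype.card_fin]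
    linarith
  rw [smul_diagonal_sub_hopfieldJ]
  exact (posDef_diagonal_sub_of_one hw).diagonal_mul_mul_diagonal fun a => (hα a).1.ne'

/-- If `c > 1 + (ν-1)/k*`, with `k* = min_a k_a`, then
`J^c = c·diag(k_a α_a²) - J` is positive definite. -/
theorem stmt0 (ν : ℕ) (hν : 2 ≤ ν) (α k : Fin ν → ℝ)
    (hα : ∀ a, α a ∈ Set.Ioo (0 : ℝ) 1) (hk : ∀ a, k a ∈ Set.Ioo (0 : ℝ) 1)
    (kstar : ℝ) (hkstar : IsLeast (Set.range k) kstar)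
    (c : ℝ) (hc : c > 1 + ((ν : ℝ) - 1) / kstar) :
    (c • Matrix.diagonal (fun a => k a * α a ^ 2) - hopfieldJ ν α k).PosDef :=
  stmt0_general ν α k hα hk kstar hkstar c hc
end

section
/- Let P ≥ 1, β ≥ 0, γ > 0, and let ⟨·⟩_ξ and ⟨·⟩_η denote expectations with respect to ξ and η uniform on {−1,1}^P. If p ∈ ℝ^P satisfies p = ⟨ξ tanh(β ξ·p)⟩_ξ + √γ ⟨η tanh((β/√γ) η·p)⟩_η, then |p|² ≤ 2β |p|². -/
open Finset

/-- `±1` value of a boolean. -/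
def spin (b : Bool) : ℝ := if b then 1 else -1

/-- Expectation with respect to `ξ` uniform on `{-1,1}^P`. -/
noncomputable def unifExp (P : ℕ) (f : (Fin P → ℝ) → ℝ) : ℝ :=
  (∑ b : Fin P → Bool, f (fun μ => spin (b μ))) / 2 ^ P

/-!
Pairing the fixed-point equation with `p` writes `|p|²` as
`⟨(ξ·p) tanh(β ξ·p)⟩ + √γ ⟨(η·p) tanh((β/√γ) η·p)⟩`. Since `x tanh(c x) ≤ c x²` for `c ≥ 0` and
the spins are orthonormal, `⟨(ξ·p)²⟩ = |p|²`, each of the two terms is at most `β |p|²`.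
-/

namespace Real

theorem sinh_le_mul_cosh {x : ℝ} (hx : 0 ≤ x) : sinh x ≤ x * cosh x := by
  rcases hx.eq_or_lt with rfl | hx
  · simp
  obtain ⟨ξ, ⟨hξ₀, hξx⟩, hξ⟩ := exists_hasDerivAt_eq_slope sinh cosh hx
    continuous_sinh.continuousOn fun y _ => hasDerivAt_sinh y
  have hcosh : cosh ξ ≤ cosh x := cosh_le_cosh.mpr <| by
    rw [abs_of_pos hξ₀, abs_of_pos hx]; exact hξx.le
  rw [sinh_zero, sub_zero, sub_zero, eq_div_iff hx.ne'] at hξ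
  nlinarith

theorem tanh_le_self {x : ℝ} (hx : 0 ≤ x) : tanh x ≤ x := by
  rw [tanh_eq_sinh_div_cosh, div_le_iff₀ (cosh_pos x)]
  exact sinh_le_mul_cosh hx

theorem abs_tanh (x : ℝ) : |tanh x| = tanh |x| := by
  rw [tanh_eq_sinh_div_cosh, tanh_eq_sinh_div_cosh, abs_div, abs_sinh, cosh_abs,
    abs_of_pos (cosh_pos x)]

theorem abs_tanh_le_abs (x : ℝ) : |tanh x| ≤ |x| :=
  abs_tanh x ▸ tanh_le_self (abs_nonneg x)

theorem mul_tanh_mul_le {c : ℝ} (hc : 0 ≤ c) (x : ℝ) : x * tanh (c * x) ≤ c * x ^ 2 :=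
  calc x * tanh (c * x) ≤ |x| * |tanh (c * x)| := (le_abs_self _).trans (abs_mul _ _).le
    _ ≤ |x| * |c * x| := mul_le_mul_of_nonneg_left (abs_tanh_le_abs _) (abs_nonneg x)
    _ = c * x ^ 2 := by rw [abs_mul, abs_of_nonneg hc, ← sq_abs]; ring

end Real

theorem spin_not (b : Bool) : spin (!b) = -spin b := by cases b <;> simp [spin]

theorem spin_mul_self (b : Bool) : spin b * spin b = 1 := by cases b <;> simp [spin]

theorem sum_spin_mul_spin {P : ℕ} (ρ σ : Fin P) :
    ∑ b : Fin P → Bool, spin (b ρ) * spin (b σ) = if ρ = σ then 2 ^ P else 0 := by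
  split_ifs with h
  · subst h
    simp [spin_mul_self]
  -- flipping the spin at `ρ` is an involution of the cube that negates every summand
  have hflip : Function.Involutive fun b : Fin P → Bool => Function.update b ρ (!b ρ) := by
    intro b
    ext τ
    rcases eq_or_ne τ ρ with rfl | hτ <;> simp [Function.update_of_ne, *]
  have hneg := Fintype.sum_equiv hflip.toPerm (fun b => spin (b ρ) * spin (b σ))
    (fun b => -(spin (b ρ) * spin (b σ))) fun b => by
      simp [Function.update_of_ne (Ne.symm h), spin_not]
  rw [sum_neg_distrib] at hneg
  linarith

section unifExp

variable {P : ℕ}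

theorem unifExp_mono {f g : (Fin P → ℝ) → ℝ} (hfg : ∀ ξ, f ξ ≤ g ξ) :
    unifExp P f ≤ unifExp P g :=
  div_le_div_of_nonneg_right (sum_le_sum fun b _ => hfg _) (by positivity)

theorem unifExp_const_mul (c : ℝ) (f : (Fin P → ℝ) → ℝ) :
    unifExp P (fun ξ => c * f ξ) = c * unifExp P f := by
  simp only [unifExp, ← mul_sum, mul_div_assoc]

theorem sum_mul_unifExp {ι : Type*} [Fintype ι] (c : ι → ℝ) (f : ι → (Fin P → ℝ) → ℝ) :
    ∑ i, c i * unifExp P (f i) = unifExp P (fun ξ => ∑ i, c i * f i ξ) := by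
  simp only [unifExp, mul_div_assoc', ← sum_div, mul_sum]
  rw [sum_comm]

theorem unifExp_mul_apply (ρ σ : Fin P) :
    unifExp P (fun ξ => ξ ρ * ξ σ) = if ρ = σ then 1 else 0 := by
  rw [unifExp, sum_spin_mul_spin]
  split_ifs <;> simp

theorem unifExp_dot_sq (p : Fin P → ℝ) :
    unifExp P (fun ξ => (∑ ρ, ξ ρ * p ρ) ^ 2) = ∑ ρ, p ρ ^ 2 := by
  have hsq : ∀ ξ : Fin P → ℝ, (∑ ρ, ξ ρ * p ρ) ^ 2 = ∑ ρ, p ρ * ∑ σ, p σ * (ξ ρ * ξ σ) := by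
    intro ξ
    rw [sq, sum_mul_sum]
    exact sum_congr rfl fun ρ _ => by rw [mul_sum]; exact sum_congr rfl fun σ _ => by ring
  simp only [hsq, ← sum_mul_unifExp, unifExp_mul_apply, mul_ite, mul_one, mul_zero,
    sum_ite_eq, mem_univ, if_true, sq]

theorem sum_mul_unifExp_mul_tanh_le {c : ℝ} (hc : 0 ≤ c) (p : Fin P → ℝ) :
    ∑ μ, p μ * unifExp P (fun ξ => ξ μ * Real.tanh (c * ∑ ρ, ξ ρ * p ρ)) ≤ c * ∑ μ, p μ ^ 2 :=
  calc _ = unifExp P (fun ξ => (∑ ρ, ξ ρ * p ρ) * Real.tanh (c * ∑ ρ, ξ ρ * p ρ)) := by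
        rw [sum_mul_unifExp]
        congr 1; ext ξ
        rw [sum_mul]
        exact sum_congr rfl fun μ _ => by ring
    _ ≤ unifExp P (fun ξ => c * (∑ ρ, ξ ρ * p ρ) ^ 2) :=
        unifExp_mono fun ξ => Real.mul_tanh_mul_le hc _
    _ = c * ∑ μ, p μ ^ 2 := by rw [unifExp_const_mul, unifExp_dot_sq]

end unifExp

theorem stmt10_general (P : ℕ) (β γ : ℝ) (hβ : 0 ≤ β) (hγ : 0 < γ)
    (p : Fin P → ℝ)
    (hp : ∀ μ, p μ =
      unifExp P (fun ξ => ξ μ * Real.tanh (β * ∑ ρ, ξ ρ * p ρ))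
      + Real.sqrt γ *
          unifExp P (fun η => η μ * Real.tanh ((β / Real.sqrt γ) * ∑ ρ, η ρ * p ρ))) :
    ∑ μ, p μ ^ 2 ≤ 2 * β * ∑ μ, p μ ^ 2 := by
  have hsqrt : 0 < Real.sqrt γ := Real.sqrt_pos.mpr hγ
  calc ∑ μ, p μ ^ 2
      = ∑ μ, p μ * unifExp P (fun ξ => ξ μ * Real.tanh (β * ∑ ρ, ξ ρ * p ρ))
        + Real.sqrt γ * ∑ μ, p μ *
          unifExp P (fun η => η μ * Real.tanh ((β / Real.sqrt γ) * ∑ ρ, η ρ * p ρ)) := by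
        rw [mul_sum, ← sum_add_distrib]
        exact sum_congr rfl fun μ _ => by rw [sq]; nth_rewrite 2 [hp μ]; ring
    _ ≤ β * ∑ μ, p μ ^ 2 + Real.sqrt γ * (β / Real.sqrt γ * ∑ μ, p μ ^ 2) :=
        add_le_add (sum_mul_unifExp_mul_tanh_le hβ p) <| mul_le_mul_of_nonneg_left
          (sum_mul_unifExp_mul_tanh_le (div_nonneg hβ hsqrt.le) p) hsqrt.le
    _ = 2 * β * ∑ μ, p μ ^ 2 := by field_simp; ring

/-- If `p` solves the three-layer RBM self-consistent equation
`p = ⟨ξ tanh(β ξ·p)⟩ + √γ ⟨η tanh((β/√γ) η·p)⟩`, then `|p|² ≤ 2β |p|²`. -/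
theorem stmt10 (P : ℕ) (hP : 1 ≤ P) (β γ : ℝ) (hβ : 0 ≤ β) (hγ : 0 < γ)
    (p : Fin P → ℝ)
    (hp : ∀ μ, p μ =
      unifExp P (fun ξ => ξ μ * Real.tanh (β * ∑ ρ, ξ ρ * p ρ))
      + Real.sqrt γ *
          unifExp P (fun η => η μ * Real.tanh ((β / Real.sqrt γ) * ∑ ρ, η ρ * p ρ))) :
    ∑ μ, p μ ^ 2 ≤ 2 * β * ∑ μ, p μ ^ 2 :=
  stmt10_general P β γ hβ hγ p hp
end

section
/- Let ν ≥ 1, P ≥ 1, positive integers N_a with N = Σ_a N_a and α_a = N_a/N, patterns ξ^{μ,a} ∈ {−1,1}^{N_a}, reals k_a, β, c, and let P̂ be a ν×ν real matrix. For t ∈ ℝ and x ∈ ℝ^{ν×P} define Φ_N(t,x) = (1/N) ln Σ_{σ} exp{ (Nt/2) Σ_μ [ Σ_a k_a α_a² (m_a^μ)² + Σ_{a≠b} α_a α_b m_a^μ m_b^μ ] + (N(β−t)c/2) Σ_μ Σ_a k_a α_a² (m_a^μ)² + N Σ_μ Σ_a x_a^μ (P̂ m^μ)_a }, where m_a^μ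 = (1/N_a) Σ_i ξ_i^{μ,a} σ_i^a and m^μ = (m_1^μ,…,m_ν^μ). Then for every a, μ: ∂Φ_N/∂x_a^μ (t,x) = ⟨(P̂ m^μ)_a⟩_{(t,x)}, and if P̂ᵀP̂ = J^c := c·diag(k_1α_1²,…,k_να_ν²) − J (J being the matrix with J_{aa}=k_aα_a², J_{ab}=α_aα_b for a≠b), then ∂Φ_N/∂t (t,x) = −(1/2) Σ_{μ=1}^P Σ_{a=1}^ν ⟨((P̂ m^μ)_a)²⟩_{(t,x)}, where ⟨·⟩_{(t,x)} is the expectation with respect to the Boltzmann weight appearing inside the logarithm. -/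
/-!
`Φ_N` is `1/N` times the logarithm of a finite sum of exponentials, so its derivative in any
parameter is the Gibbs average of the derivative of the exponent, divided by `N`. The exponent is
linear in `x_a^μ` with coefficient `N (P̂ m^μ)_a`, and affine in `t` with slope
`(N/2) Σ_μ (m^μ ⬝ J m^μ - c m^μ ⬝ diag(k α²) m^μ)`; when `P̂ᵀP̂ = J^c` this slope is
`-(N/2) Σ_μ |P̂ m^μ|²`.
-/

open Finset Matrix

section GibbsAverage

variable {S : Type*} [Fintype S]

noncomputable def gibbsAverage (w O : S → ℝ) : ℝ := (∑ σ, O σ * w σ) / ∑ σ, w σ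

theorem gibbsAverage_const_mul (w O : S → ℝ) (r : ℝ) :
    gibbsAverage w (fun σ => r * O σ) = r * gibbsAverage w O := by
  simp only [gibbsAverage, mul_assoc, ← Finset.mul_sum, mul_div_assoc]

theorem gibbsAverage_sum {ι : Type*} (s : Finset ι) (w : S → ℝ) (O : ι → S → ℝ) :
    gibbsAverage w (fun σ => ∑ i ∈ s, O i σ) = ∑ i ∈ s, gibbsAverage w (O i) := by
  simp only [gibbsAverage, Finset.sum_mul, ← Finset.sum_div]
  rw [Finset.sum_comm]

theorem hasDerivAt_inv_mul_log_sum_exp [Nonempty S] {n : ℝ} (hn : n ≠ 0) {φ : S → ℝ → ℝ}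
    {O : S → ℝ} {s : ℝ} (hφ : ∀ σ, HasDerivAt (φ σ) (n * O σ) s) :
    HasDerivAt (fun y => 1 / n * Real.log (∑ σ, Real.exp (φ σ y)))
      (gibbsAverage (fun σ => Real.exp (φ σ s)) O) s := by
  have hZ : 0 < ∑ σ, Real.exp (φ σ s) :=
    Finset.sum_pos (fun σ _ => Real.exp_pos _) Finset.univ_nonempty
  have hlog := (HasDerivAt.fun_sum fun σ _ => (hφ σ).exp).log hZ.ne' |>.const_mul (1 / n)
  refine hlog.congr_deriv ?_
  simp only [gibbsAverage]
  field_simp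
  rw [Finset.mul_sum]
  exact Finset.sum_congr rfl fun σ _ => by ring

end GibbsAverage

theorem hasDerivAt_update_update {𝕜 ι κ : Type*} [NontriviallyNormedField 𝕜] [Fintype κ]
    [DecidableEq ι] [DecidableEq κ] (x : ι → κ → 𝕜) (i : ι) (j : κ) (y : 𝕜) :
    HasDerivAt (fun s => Function.update x i (Function.update (x i) j s))
      (Pi.single i (Pi.single j 1)) y := by
  rw [hasDerivAt_pi]
  intro i'
  rcases eq_or_ne i' i with rfl | h
  · simpa using hasDerivAt_update (x i') j y
  · simpa [h] using hasDerivAt_const y (x i')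

theorem hasDerivAt_sum_update_update_mul {𝕜 ι κ : Type*} [NontriviallyNormedField 𝕜]
    [Fintype ι] [Fintype κ] [DecidableEq ι] [DecidableEq κ] (x w : ι → κ → 𝕜) (i : ι) (j : κ)
    (y : 𝕜) :
    HasDerivAt
      (fun s => ∑ j', ∑ i', Function.update x i (Function.update (x i) j s) i' j' * w i' j')
      (w i j) y := by
  have h := hasDerivAt_update_update x i j y
  have hsum := HasDerivAt.fun_sum fun j' (_ : j' ∈ univ) =>
    HasDerivAt.fun_sum fun i' (_ : i' ∈ univ) =>
      (hasDerivAt_pi.1 (hasDerivAt_pi.1 h i') j').mul_const (w i' j')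
  refine hsum.congr_deriv ?_
  simp [Pi.single_apply, ite_apply]

theorem dotProduct_hopfieldJ_mulVec {ν : ℕ} (α k v : Fin ν → ℝ) :
    v ⬝ᵥ hopfieldJ ν α k *ᵥ v = ∑ a, k a * α a ^ 2 * v a ^ 2 +
      ∑ a, ∑ b ∈ univ.filter (fun b => b ≠ a), α a * α b * v a * v b := by
  simp only [dotProduct, mulVec, hopfieldJ, of_apply]
  rw [← Finset.sum_add_distrib]
  refine Finset.sum_congr rfl fun a _ => ?_
  rw [Finset.mul_sum, ← Finset.add_sum_erase _ _ (Finset.mem_univ a), Finset.filter_ne']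
  congr 1
  · simp only [if_true]; ring
  · refine Finset.sum_congr rfl fun b hb => ?_
    rw [if_neg (Finset.ne_of_mem_erase hb).symm]
    ring

theorem sum_mulVec_sq_eq {ν : ℕ} (α k : Fin ν → ℝ) (c : ℝ) (Phat : Matrix (Fin ν) (Fin ν) ℝ)
    (hPP : Phatᵀ * Phat = c • Matrix.diagonal (fun a => k a * α a ^ 2) - hopfieldJ ν α k)
    (v : Fin ν → ℝ) :
    ∑ a, (Phat *ᵥ v) a ^ 2 = c * ∑ a, k a * α a ^ 2 * v a ^ 2 - v ⬝ᵥ hopfieldJ ν α k *ᵥ v := by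
  have : ∑ a, (Phat *ᵥ v) a ^ 2 = v ⬝ᵥ (Phatᵀ * Phat) *ᵥ v := by
    rw [← mulVec_mulVec, dotProduct_mulVec, vecMul_transpose]
    simp [dotProduct, sq]
  rw [this, hPP, sub_mulVec, dotProduct_sub, smul_mulVec, dotProduct_smul]
  congr 1
  simp only [smul_eq_mul, dotProduct, mulVec_diagonal, Finset.mul_sum]
  exact Finset.sum_congr rfl fun a _ => by ring

-- The slope `(n/2) (A - c D)` is written as `n * O`, the shape `hasDerivAt_inv_mul_log_sum_exp`
-- expects, with `c D - A` the quadratic form of `J^c` from `sum_mulVec_sq_eq`.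
theorem hasDerivAt_affine_interpolation (n β c A D C t : ℝ) :
    HasDerivAt (fun s => n * s / 2 * A + n * (β - s) * c / 2 * D + C)
      (n * (-(1 / 2) * (c * D - A))) t := by
  have h := ((hasDerivAt_id t).const_mul (n / 2 * (A - c * D))).add_const (n * β * c / 2 * D + C)
  have hf : (fun s => n * s / 2 * A + n * (β - s) * c / 2 * D + C)
      = fun s => n / 2 * (A - c * D) * id s + (n * β * c / 2 * D + C) := by
    funext s; simp only [id]; ring
  exact hf ▸ h.congr_deriv (by ring)

theorem stmt15_general (ν P : ℕ) (hν : 1 ≤ ν)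
    (Nsz : Fin ν → ℕ) (hNsz : ∀ a, 1 ≤ Nsz a)
    (N : ℕ) (hN : N = ∑ a, Nsz a)
    (α : Fin ν → ℝ)
    (k : Fin ν → ℝ) (β c : ℝ)
    (Phat : Matrix (Fin ν) (Fin ν) ℝ)
    -- group Mattis magnetizations
    (m : ((a : Fin ν) → Fin (Nsz a) → Bool) → Fin ν → Fin P → ℝ)
    -- interpolating Boltzmann factor
    (B : ℝ → (Fin ν → Fin P → ℝ) → ((a : Fin ν) → Fin (Nsz a) → Bool) → ℝ)
    (hB : ∀ t x σ, B t x σ = Real.exp (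
      (N : ℝ) * t / 2 * ∑ μ, (∑ a, k a * α a ^ 2 * m σ a μ ^ 2
        + ∑ a, ∑ b ∈ Finset.univ.filter (fun b => b ≠ a),
            α a * α b * m σ a μ * m σ b μ)
      + (N : ℝ) * (β - t) * c / 2 * ∑ μ, ∑ a, k a * α a ^ 2 * m σ a μ ^ 2
      + (N : ℝ) * ∑ μ, ∑ a, x a μ * Phat.mulVec (fun b => m σ b μ) a))
    -- interpolating pressure
    (Φ : ℝ → (Fin ν → Fin P → ℝ) → ℝ)
    (hΦ : ∀ t x, Φ t x =
      (1 / (N : ℝ)) * Real.log (∑ σ : (a : Fin ν) → Fin (Nsz a) → Bool, B t x σ))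
    -- Boltzmann–Gibbs expectation associated to `B t x`
    (avg : ℝ → (Fin ν → Fin P → ℝ) → (((a : Fin ν) → Fin (Nsz a) → Bool) → ℝ) → ℝ)
    (havg : ∀ t x O, avg t x O =
      (∑ σ : (a : Fin ν) → Fin (Nsz a) → Bool, O σ * B t x σ) /
        (∑ σ : (a : Fin ν) → Fin (Nsz a) → Bool, B t x σ)) :
    (∀ (t : ℝ) (x : Fin ν → Fin P → ℝ) (a : Fin ν) (μ : Fin P),
      HasDerivAt (fun s : ℝ => Φ t (Function.update x a (Function.update (x a) μ s)))
        (avg t x (fun σ => Phat.mulVec (fun b => m σ b μ) a)) (x a μ)) ∧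
    (Phatᵀ * Phat = c • Matrix.diagonal (fun a => k a * α a ^ 2) - hopfieldJ ν α k →
      ∀ (t : ℝ) (x : Fin ν → Fin P → ℝ),
        HasDerivAt (fun s : ℝ => Φ s x)
          (-(1 / 2) * ∑ μ, ∑ a, avg t x (fun σ => Phat.mulVec (fun b => m σ b μ) a ^ 2))
          t) := by
  have hN0 : (N : ℝ) ≠ 0 := by
    rw [hN, Nat.cast_ne_zero, ← Nat.pos_iff_ne_zero]
    exact Finset.sum_pos (fun a _ => hNsz a) ⟨⟨0, hν⟩, Finset.mem_univ _⟩
  have hgibbs : ∀ t x O, avg t x O = gibbsAverage (B t x) O := havg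
  obtain rfl := funext fun t => funext fun x => funext (hB t x)
  simp only [hΦ, hgibbs]
  refine ⟨fun t x a μ => ?_, fun hPP t x => ?_⟩
  · have hx : Function.update x a (Function.update (x a) μ (x a μ)) = x := by simp
    conv in gibbsAverage _ _ => rw [← hx]
    refine hasDerivAt_inv_mul_log_sum_exp hN0 fun σ => ?_
    exact ((hasDerivAt_sum_update_update_mul x _ a μ (x a μ)).const_mul _).const_add _
  · simp only [← gibbsAverage_sum, ← gibbsAverage_const_mul]
    refine hasDerivAt_inv_mul_log_sum_exp hN0 fun σ => ?_
    simp only [sum_mulVec_sq_eq α k c Phat hPP, dotProduct_hopfieldJ_mulVec,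
      Finset.sum_sub_distrib, ← Finset.mul_sum]
    exact hasDerivAt_affine_interpolation _ _ _ _ _ _ _

/-- Space and time derivatives of the Guerra-type interpolating pressure `Φ_N` of the
multi-species Hopfield model. -/
theorem stmt15 (ν P : ℕ) (hν : 1 ≤ ν) (hP : 1 ≤ P)
    (Nsz : Fin ν → ℕ) (hNsz : ∀ a, 1 ≤ Nsz a)
    (N : ℕ) (hN : N = ∑ a, Nsz a)
    (α : Fin ν → ℝ) (hα : ∀ a, α a = (Nsz a : ℝ) / (N : ℝ))
    (ξ : Fin P → (a : Fin ν) → Fin (Nsz a) → ℝ)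
    (hξ : ∀ μ a i, ξ μ a i = 1 ∨ ξ μ a i = -1)
    (k : Fin ν → ℝ) (β c : ℝ)
    (Phat : Matrix (Fin ν) (Fin ν) ℝ)
    -- group Mattis magnetizations
    (m : ((a : Fin ν) → Fin (Nsz a) → Bool) → Fin ν → Fin P → ℝ)
    (hm : ∀ σ a μ, m σ a μ =
      (1 / (Nsz a : ℝ)) * ∑ i, ξ μ a i * (if σ a i then (1 : ℝ) else -1))
    -- interpolating Boltzmann factor
    (B : ℝ → (Fin ν → Fin P → ℝ) → ((a : Fin ν) → Fin (Nsz a) → Bool) → ℝ)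
    (hB : ∀ t x σ, B t x σ = Real.exp (
      (N : ℝ) * t / 2 * ∑ μ, (∑ a, k a * α a ^ 2 * m σ a μ ^ 2
        + ∑ a, ∑ b ∈ Finset.univ.filter (fun b => b ≠ a),
            α a * α b * m σ a μ * m σ b μ)
      + (N : ℝ) * (β - t) * c / 2 * ∑ μ, ∑ a, k a * α a ^ 2 * m σ a μ ^ 2
      + (N : ℝ) * ∑ μ, ∑ a, x a μ * Phat.mulVec (fun b => m σ b μ) a))
    -- interpolating pressure
    (Φ : ℝ → (Fin ν → Fin P → ℝ) → ℝ)
    (hΦ : ∀ t x, Φ t x =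
      (1 / (N : ℝ)) * Real.log (∑ σ : (a : Fin ν) → Fin (Nsz a) → Bool, B t x σ))
    -- Boltzmann–Gibbs expectation associated to `B t x`
    (avg : ℝ → (Fin ν → Fin P → ℝ) → (((a : Fin ν) → Fin (Nsz a) → Bool) → ℝ) → ℝ)
    (havg : ∀ t x O, avg t x O =
      (∑ σ : (a : Fin ν) → Fin (Nsz a) → Bool, O σ * B t x σ) /
        (∑ σ : (a : Fin ν) → Fin (Nsz a) → Bool, B t x σ)) :
    (∀ (t : ℝ) (x : Fin ν → Fin P → ℝ) (a : Fin ν) (μ : Fin P),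
      HasDerivAt (fun s : ℝ => Φ t (Function.update x a (Function.update (x a) μ s)))
        (avg t x (fun σ => Phat.mulVec (fun b => m σ b μ) a)) (x a μ)) ∧
    (Phatᵀ * Phat = c • Matrix.diagonal (fun a => k a * α a ^ 2) - hopfieldJ ν α k →
      ∀ (t : ℝ) (x : Fin ν → Fin P → ℝ),
        HasDerivAt (fun s : ℝ => Φ s x)
          (-(1 / 2) * ∑ μ, ∑ a, avg t x (fun σ => Phat.mulVec (fun b => m σ b μ) a ^ 2))
          t) :=
  stmt15_general ν P hν Nsz hNsz N hN α k β c Phat m B hB Φ hΦ avg havg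
end
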